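/- arXiv:1506.02086 — 2 statements merged into one kernel-verified Lean document; each statement's English description precedes it below -/
import Mathlib

section
/- Assume q is not a root of unity, and let V be a finite-dimensional module over the subalgebra A of U_q(sl_2) generated by ν_x, ν_y, ν_z. Then the kernel of the action of ν_y on V is nonzero, is invariant under the actions of z^2 and ν_yν_x, and the actions of z^2 and ν_yν_x commute on this kernel; consequently the kernel contains a common eigenvector for z^2 and ν_yν_x. -/
section aux

variable {K : Type*} [Field K] {U : Type*} [Ring U] [Algebra K U]

/-- Key identities in the equitable presentation of `U_q(sl2)`. -/
lemma nu_identities (q : K) (x y z νx νy νz : U) (hq : q ≠ 0)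
    (hxy : q • (x * y) - q⁻¹ • (y * x) = (q - q⁻¹) • (1 : U))
    (hyz : q • (y * z) - q⁻¹ • (z * y) = (q - q⁻¹) • (1 : U))
    (hzx : q • (z * x) - q⁻¹ • (x * z) = (q - q⁻¹) • (1 : U))
    (hνx : νx = q • ((1 : U) - y * z))
    (hνy : νy = q • ((1 : U) - z * x))
    (hνz : νz = q • ((1 : U) - x * y)) :
    νy * (z*z) = (q^4) • ((z*z) * νy) ∧
    (z*z) * νx = (q^4) • (νx * (z*z)) ∧
    (x*x) * νy = (q^4) • (νy * (x*x)) ∧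
    (x*x) * (z*z) = (1:U) - (q + q^3) • νy + (q^4) • (νy*νy) ∧
    (z*z) * (x*x) = (1:U) - (q⁻¹ + (q^3)⁻¹) • νy + ((q^4)⁻¹) • (νy*νy) ∧
    νy * νx = (q^2) • (νx*νy) + (q^2-1) • (z*z) - (q^2-1) • (1:U) ∧
    νz * νy = (q^2) • (νy*νz) + (q^2-1) • (x*x) - (q^2-1) • (1:U) ∧
    (z*z) * (νy*νx) = (νy*νx) * (z*z) ∧
    νy * (νy*νx) = ((q^2) • (νy*νx) + (q^6-q^4) • (z*z) - (q^2-1) • (1:U)) * νy := by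
  have hq2 : (q:K)^2 ≠ 0 := pow_ne_zero _ hq
  have hq4 : (q:K)^4 ≠ 0 := pow_ne_zero _ hq
  have c5 : z * x = 1 - q⁻¹ • νy := by
    rw [hνy, smul_smul, inv_mul_cancel₀ hq, one_smul, sub_sub_cancel]
  have c3 : y * z = 1 - q⁻¹ • νx := by
    rw [hνx, smul_smul, inv_mul_cancel₀ hq, one_smul, sub_sub_cancel]
  have c1 : x * y = 1 - q⁻¹ • νz := by
    rw [hνz, smul_smul, inv_mul_cancel₀ hq, one_smul, sub_sub_cancel]
  have c6 : x * z = 1 - q • νy := by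
    have h1 : q⁻¹ • (x*z) = q • (z*x) - (q-q⁻¹) • (1:U) := by rw [← hzx]; abel
    have h2 : x*z = q • (q⁻¹ • (x*z)) := by rw [smul_smul, mul_inv_cancel₀ hq, one_smul]
    rw [h2, h1, c5]
    match_scalars <;> field_simp <;> ring
  have c4 : z * y = 1 - q • νx := by
    have h1 : q⁻¹ • (z*y) = q • (y*z) - (q-q⁻¹) • (1:U) := by rw [← hyz]; abel
    have h2 : z*y = q • (q⁻¹ • (z*y)) := by rw [smul_smul, mul_inv_cancel₀ hq, one_smul]
    rw [h2, h1, c3]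
    match_scalars <;> field_simp <;> ring
  have c2 : y * x = 1 - q • νz := by
    have h1 : q⁻¹ • (y*x) = q • (x*y) - (q-q⁻¹) • (1:U) := by rw [← hxy]; abel
    have h2 : y*x = q • (q⁻¹ • (y*x)) := by rw [smul_smul, mul_inv_cancel₀ hq, one_smul]
    rw [h2, h1, c1]
    match_scalars <;> field_simp <;> ring
  have hzv : νz = q⁻¹ • ((1:U) - y*x) := by
    rw [c2, sub_sub_cancel, smul_smul, inv_mul_cancel₀ hq, one_smul]
  have hxv : νx = q⁻¹ • ((1:U) - z*y) := by
    rw [c4, sub_sub_cancel, smul_smul, inv_mul_cancel₀ hq, one_smul]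
  have rxy : x*y = (q^2)⁻¹ • (y*x) + (1 - (q^2)⁻¹) • (1:U) := by
    rw [c1, hzv]
    match_scalars <;> field_simp <;> ring
  have ryz : y*z = (q^2)⁻¹ • (z*y) + (1 - (q^2)⁻¹) • (1:U) := by
    rw [c3, hxv]
    match_scalars <;> field_simp <;> ring
  have L1 : νy * z = (q^2) • (z * νy) := by
    calc νy * z = q • (z - z*(x*z)) := by
          rw [hνy, smul_mul_assoc, sub_mul, one_mul, mul_assoc]
    _ = q • (z - z*(1 - q•νy)) := by rw [c6]
    _ = (q^2) • (z*νy) := by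
          rw [mul_sub, mul_one, mul_smul_comm]
          match_scalars <;> ring
  have L2 : x * νy = (q^2) • (νy * x) := by
    calc x * νy = q • (x - (x*z)*x) := by
          rw [hνy, mul_smul_comm, mul_sub, mul_one, ← mul_assoc]
    _ = q • (x - (1 - q•νy)*x) := by rw [c6]
    _ = (q^2) • (νy*x) := by
          rw [sub_mul, one_mul, smul_mul_assoc]
          match_scalars <;> ring
  have L8 : z * νx = (q^2) • (νx * z) := by
    calc z * νx = q • (z - (z*y)*z) := by
          rw [hνx, mul_smul_comm, mul_sub, mul_one, ← mul_assoc]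
    _ = q • (z - (1 - q•νx)*z) := by rw [c4]
    _ = (q^2) • (νx*z) := by
          rw [sub_mul, one_mul, smul_mul_assoc]
          match_scalars <;> ring
  have L1' : z * νy = (q^2)⁻¹ • (νy * z) := by
    rw [L1, smul_smul, inv_mul_cancel₀ hq2, one_smul]
  have E1 : νy*(z*z) = (q^4) • ((z*z)*νy) := by
    conv_lhs => rw [← mul_assoc, L1, smul_mul_assoc, mul_assoc, L1, mul_smul_comm, smul_smul]
    rw [← mul_assoc]
    match_scalars <;> ring
  have E8 : (z*z)*νx = (q^4) • (νx*(z*z)) := by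
    conv_lhs => rw [mul_assoc, L8, mul_smul_comm, ← mul_assoc, L8, smul_mul_assoc, smul_smul,
      mul_assoc]
    match_scalars <;> ring
  have E5 : (x*x)*νy = (q^4) • (νy*(x*x)) := by
    conv_lhs => rw [mul_assoc, L2, mul_smul_comm, ← mul_assoc, L2, smul_mul_assoc, smul_smul,
      mul_assoc]
    match_scalars <;> ring
  have E3 : (x*x)*(z*z) = (1:U) - (q + q^3) • νy + (q^4) • (νy*νy) := by
    have h31 : (x*νy)*z = (q^2) • (νy*(x*z)) := by rw [L2, smul_mul_assoc, mul_assoc]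
    calc (x*x)*(z*z) = x*((x*z)*z) := by rw [mul_assoc, ← mul_assoc x z z]
    _ = x*((1 - q•νy)*z) := by rw [c6]
    _ = x*z - q•((x*νy)*z) := by
          rw [sub_mul, one_mul, smul_mul_assoc, mul_sub, mul_smul_comm, ← mul_assoc]
    _ = (1 - q•νy) - q•((q^2)•(νy*(1 - q•νy))) := by rw [h31, c6]
    _ = (1:U) - (q + q^3) • νy + (q^4) • (νy*νy) := by
          rw [mul_sub, mul_one, mul_smul_comm]
          match_scalars <;> ring
  have E4 : (z*z)*(x*x) = (1:U) - (q⁻¹ + (q^3)⁻¹) • νy + ((q^4)⁻¹) • (νy*νy) := by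
    have h41 : (z*νy)*x = (q^2)⁻¹ • (νy*(z*x)) := by rw [L1', smul_mul_assoc, mul_assoc]
    calc (z*z)*(x*x) = z*((z*x)*x) := by rw [mul_assoc, ← mul_assoc z x x]
    _ = z*((1 - q⁻¹•νy)*x) := by rw [c5]
    _ = z*x - q⁻¹•((z*νy)*x) := by
          rw [sub_mul, one_mul, smul_mul_assoc, mul_sub, mul_smul_comm, ← mul_assoc]
    _ = (1 - q⁻¹•νy) - q⁻¹•((q^2)⁻¹•(νy*(1 - q⁻¹•νy))) := by rw [h41, c5]
    _ = (1:U) - (q⁻¹ + (q^3)⁻¹) • νy + ((q^4)⁻¹) • (νy*νy) := by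
          rw [mul_sub, mul_one, mul_smul_comm]
          match_scalars <;> field_simp <;> ring
  have expand1 : ∀ a b : U, ((1:U) - a)*(1 - b) = 1 - b - a + a*b := by
    intro a b; noncomm_ring
  have expand2 : ∀ a b : U, ((1:U) - q•a)*(1 - q•b) = 1 - q•b - q•a + (q^2)•(a*b) := by
    intro a b
    rw [expand1, smul_mul_assoc, mul_smul_comm, smul_smul]
    match_scalars <;> ring
  have w0 : (z*x)*(y*z)
      = (1-(q^2)⁻¹)•(z*z) + (q^2)⁻¹•((1:U) - q•νy - q•νx + (q^2)•(νx*νy)) := by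
    calc (z*x)*(y*z) = (z*(x*y))*z := by rw [← mul_assoc, mul_assoc z x y]
    _ = (z*((q^2)⁻¹ • (y*x) + (1 - (q^2)⁻¹) • 1))*z := by rw [rxy]
    _ = (q^2)⁻¹•((z*(y*x))*z) + (1-(q^2)⁻¹)•(z*z) := by
          rw [mul_add, mul_smul_comm, mul_smul_comm, mul_one, add_mul, smul_mul_assoc,
            smul_mul_assoc]
    _ = (q^2)⁻¹•((z*y)*(x*z)) + (1-(q^2)⁻¹)•(z*z) := by
          rw [← mul_assoc z y x, mul_assoc (z*y) x z]
    _ = (q^2)⁻¹•(((1:U)-q•νx)*(1-q•νy)) + (1-(q^2)⁻¹)•(z*z) := by rw [c4, c6]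
    _ = (1-(q^2)⁻¹)•(z*z) + (q^2)⁻¹•((1:U) - q•νy - q•νx + (q^2)•(νx*νy)) := by
          rw [expand2, add_comm]
  have E0 : νy * νx = (q^2) • (νx*νy) + (q^2-1) • (z*z) - (q^2-1) • (1:U) := by
    calc νy*νx = (q*q) • (((1:U) - z*x)*(1-y*z)) := by
          rw [hνy, hνx, smul_mul_assoc, mul_smul_comm, smul_smul]
    _ = (q*q) • ((1:U) - y*z - z*x + (z*x)*(y*z)) := by rw [expand1]
    _ = (q*q) • ((1:U) - (1 - q⁻¹•νx) - (1 - q⁻¹•νy)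
          + ((1-(q^2)⁻¹)•(z*z) + (q^2)⁻¹•((1:U) - q•νy - q•νx + (q^2)•(νx*νy)))) := by
          rw [w0, c3, c5]
    _ = (q^2) • (νx*νy) + (q^2-1) • (z*z) - (q^2-1) • (1:U) := by
          match_scalars <;> field_simp <;> ring
  have w2 : (x*y)*(z*x)
      = (1-(q^2)⁻¹)•(x*x) + (q^2)⁻¹•((1:U) - q•νz - q•νy + (q^2)•(νy*νz)) := by
    calc (x*y)*(z*x) = (x*(y*z))*x := by rw [← mul_assoc, mul_assoc x y z]
    _ = (x*((q^2)⁻¹ • (z*y) + (1 - (q^2)⁻¹) • 1))*x := by rw [ryz]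
    _ = (q^2)⁻¹•((x*(z*y))*x) + (1-(q^2)⁻¹)•(x*x) := by
          rw [mul_add, mul_smul_comm, mul_smul_comm, mul_one, add_mul, smul_mul_assoc,
            smul_mul_assoc]
    _ = (q^2)⁻¹•((x*z)*(y*x)) + (1-(q^2)⁻¹)•(x*x) := by
          rw [← mul_assoc x z y, mul_assoc (x*z) y x]
    _ = (q^2)⁻¹•(((1:U)-q•νy)*(1-q•νz)) + (1-(q^2)⁻¹)•(x*x) := by rw [c6, c2]
    _ = (1-(q^2)⁻¹)•(x*x) + (q^2)⁻¹•((1:U) - q•νz - q•νy + (q^2)•(νy*νz)) := by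
          rw [expand2, add_comm]
  have E2 : νz * νy = (q^2) • (νy*νz) + (q^2-1) • (x*x) - (q^2-1) • (1:U) := by
    calc νz*νy = (q*q) • (((1:U) - x*y)*(1-z*x)) := by
          rw [hνz, hνy, smul_mul_assoc, mul_smul_comm, smul_smul]
    _ = (q*q) • ((1:U) - z*x - x*y + (x*y)*(z*x)) := by rw [expand1]
    _ = (q*q) • ((1:U) - (1 - q⁻¹•νy) - (1 - q⁻¹•νz)
          + ((1-(q^2)⁻¹)•(x*x) + (q^2)⁻¹•((1:U) - q•νz - q•νy + (q^2)•(νy*νz)))) := by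
          rw [w2, c5, c1]
    _ = (q^2) • (νy*νz) + (q^2-1) • (x*x) - (q^2-1) • (1:U) := by
          match_scalars <;> field_simp <;> ring
  have E1' : (z*z)*νy = (q^4)⁻¹ • (νy*(z*z)) := by
    rw [E1, smul_smul, inv_mul_cancel₀ hq4, one_smul]
  have E7 : (z*z)*(νy*νx) = (νy*νx)*(z*z) := by
    calc (z*z)*(νy*νx) = ((z*z)*νy)*νx := by rw [mul_assoc (z*z) νy νx]
    _ = (q^4)⁻¹ • (νy*((z*z)*νx)) := by rw [E1', smul_mul_assoc, mul_assoc]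
    _ = (q^4)⁻¹ • (νy*((q^4)•(νx*(z*z)))) := by rw [E8]
    _ = (νy*νx)*(z*z) := by
          rw [mul_smul_comm, smul_smul, inv_mul_cancel₀ hq4, one_smul, ← mul_assoc]
  have E6 : νy * (νy*νx)
      = ((q^2) • (νy*νx) + (q^6-q^4) • (z*z) - (q^2-1) • (1:U)) * νy := by
    have rhs : ((q^2) • (νy*νx) + (q^6-q^4) • (z*z) - (q^2-1) • (1:U)) * νy
        = (q^2) • ((νy*νx)*νy) + (q^6-q^4) • ((z*z)*νy) - (q^2-1) • νy := by
      rw [sub_mul, add_mul, smul_mul_assoc, smul_mul_assoc, smul_mul_assoc, one_mul]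
    calc νy * (νy*νx)
        = νy*((q^2) • (νx*νy) + (q^2-1) • (z*z) - (q^2-1) • (1:U)) := by rw [E0]
    _ = (q^2) • (νy*(νx*νy)) + (q^2-1) • (νy*(z*z)) - (q^2-1) • (νy*1) := by
          rw [mul_sub, mul_add, mul_smul_comm, mul_smul_comm, mul_smul_comm]
    _ = (q^2) • ((νy*νx)*νy) + (q^2-1) • ((q^4)•((z*z)*νy)) - (q^2-1) • νy := by
          rw [← mul_assoc, E1, mul_one]
    _ = ((q^2) • (νy*νx) + (q^6-q^4) • (z*z) - (q^2-1) • (1:U)) * νy := by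
          rw [rhs]
          match_scalars <;> ring
  exact ⟨E1, E8, E5, E3, E4, E0, E2, E7, E6⟩

end aux

set_option maxHeartbeats 2000000 in
/-- For `q` not a root of unity and `V` a nonzero finite-dimensional module over
the subalgebra `A` of `U_q(sl_2)` generated by `ν_x, ν_y, ν_z` (over an
algebraically closed field): the kernel of the action of `ν_y` is nonzero, is
invariant under the actions of `z²` and `ν_y ν_x`, these two actions commute on
the kernel, and the kernel contains a common eigenvector for `z²` and `ν_y ν_x`. -/
theorem stmt_18 (K : Type*) [Field K] [IsAlgClosed K] (q : K) (hq : q ≠ 0)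
    (hqru : ∀ n : ℕ, 0 < n → q ^ n ≠ 1)
    (U : Type*) [Ring U] [Algebra K U] (x y yi z : U)
    (hyyi : y * yi = 1) (hyiy : yi * y = 1)
    (hxy : q • (x * y) - q⁻¹ • (y * x) = (q - q⁻¹) • (1 : U))
    (hyz : q • (y * z) - q⁻¹ • (z * y) = (q - q⁻¹) • (1 : U))
    (hzx : q • (z * x) - q⁻¹ • (x * z) = (q - q⁻¹) • (1 : U))
    (νx νy νz : U)
    (hνx : νx = q • ((1 : U) - y * z))
    (hνy : νy = q • ((1 : U) - z * x))
    (hνz : νz = q • ((1 : U) - x * y))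
    (A : Subalgebra K U) (hA : A = Algebra.adjoin K {νx, νy, νz})
    (V : Type*) [AddCommGroup V] [Module K V] [FiniteDimensional K V] [Nontrivial V]
    (ρ : A →ₐ[K] Module.End K V)
    (ay az aw : A)
    (hay : (ay : U) = νy) (haz : (az : U) = z ^ 2) (haw : (aw : U) = νy * νx) :
    LinearMap.ker (ρ ay) ≠ ⊥ ∧
    (∀ v ∈ LinearMap.ker (ρ ay), ρ az v ∈ LinearMap.ker (ρ ay)) ∧
    (∀ v ∈ LinearMap.ker (ρ ay), ρ aw v ∈ LinearMap.ker (ρ ay)) ∧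
    (∀ v ∈ LinearMap.ker (ρ ay), ρ az (ρ aw v) = ρ aw (ρ az v)) ∧
    (∃ v ∈ LinearMap.ker (ρ ay), v ≠ 0 ∧
      ∃ μ₁ μ₂ : K, ρ az v = μ₁ • v ∧ ρ aw v = μ₂ • v) := by
  obtain ⟨E1, E8, E5, E3, E4, E0, E2, E7, E6⟩ :=
    nu_identities q x y z νx νy νz hq hxy hyz hzx hνx hνy hνz
  have hq4 : (q:K)^4 ≠ 0 := pow_ne_zero _ hq
  have hq21 : (q:K)^2 - 1 ≠ 0 := sub_ne_zero.mpr (hqru 2 (by norm_num))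
  have haz' : (az : U) = z*z := by rw [haz, pow_two]
  -- memberships
  have hmx : νx ∈ A := by rw [hA]; exact Algebra.subset_adjoin (by simp)
  have hmy : νy ∈ A := by rw [hA]; exact Algebra.subset_adjoin (by simp)
  have hmz : νz ∈ A := by rw [hA]; exact Algebra.subset_adjoin (by simp)
  have hmx2 : x*x ∈ A := by
    have hx2 : x*x = (q^2-1)⁻¹ • (νz*νy - (q^2)•(νy*νz) + (q^2-1)•(1:U)) := by
      rw [E2]
      match_scalars <;> field_simp <;> ring
    rw [hx2]
    exact A.smul_mem (A.add_mem (A.sub_mem (A.mul_mem hmz hmy)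
      (A.smul_mem (A.mul_mem hmy hmz) _)) (A.smul_mem A.one_mem _)) _
  set ax2 : A := ⟨x*x, hmx2⟩ with hax2def
  have hax2 : (ax2 : U) = x*x := rfl
  -- A-level identities
  have hA1 : ay * az = (q^4) • (az * ay) := by
    apply Subtype.ext
    push_cast [hay, haz']
    exact E1
  have hA2 : ax2 * ay = (q^4) • (ay * ax2) := by
    apply Subtype.ext
    push_cast [hay, hax2]
    exact E5
  have hA3 : ax2 * az = 1 - (q+q^3) • ay + (q^4) • (ay*ay) := by
    apply Subtype.ext
    push_cast [hay, haz', hax2]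
    exact E3
  have hA4 : az * ax2 = 1 - (q⁻¹+(q^3)⁻¹) • ay + ((q^4)⁻¹) • (ay*ay) := by
    apply Subtype.ext
    push_cast [hay, haz', hax2]
    exact E4
  have hA5 : az * aw = aw * az := by
    apply Subtype.ext
    push_cast [haz', haw]
    exact E7
  have hA6 : ay * aw = ((q^2) • aw + (q^6-q^4) • az - (q^2-1) • 1) * ay := by
    apply Subtype.ext
    push_cast [hay, haw, haz']
    exact E6
  -- operator level
  have hρ1 : (ρ ay) * (ρ az) = (q^4) • ((ρ az) * (ρ ay)) := by
    rw [← map_mul, hA1, map_smul, map_mul]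
  have hρ2 : (ρ ax2) * (ρ ay) = (q^4) • ((ρ ay) * (ρ ax2)) := by
    rw [← map_mul, hA2, map_smul, map_mul]
  have hρ3 : (ρ ax2) * (ρ az)
      = 1 - (q+q^3) • (ρ ay) + (q^4) • ((ρ ay) * (ρ ay)) := by
    rw [← map_mul, hA3, map_add, map_sub, map_one, map_smul, map_smul, map_mul]
  have hρ4 : (ρ az) * (ρ ax2)
      = 1 - (q⁻¹+(q^3)⁻¹) • (ρ ay) + ((q^4)⁻¹) • ((ρ ay) * (ρ ay)) := by
    rw [← map_mul, hA4, map_add, map_sub, map_one, map_smul, map_smul, map_mul]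
  have hρ5 : (ρ az) * (ρ aw) = (ρ aw) * (ρ az) := by
    rw [← map_mul, hA5, map_mul]
  have hρ6 : (ρ ay) * (ρ aw)
      = ((q^2) • (ρ aw) + (q^6-q^4) • (ρ az) - (q^2-1) • 1) * (ρ ay) := by
    rw [← map_mul, hA6, map_mul, map_sub, map_add, map_smul, map_smul, map_smul, map_one]
  have hCM : (ρ az) * (ρ ay) = ((q^4)⁻¹) • ((ρ ay) * (ρ az)) := by
    rw [hρ1, smul_smul, inv_mul_cancel₀ hq4, one_smul]
  have hMX : (ρ ay) * (ρ ax2) = ((q^4)⁻¹) • ((ρ ax2) * (ρ ay)) := by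
    rw [hρ2, smul_smul, inv_mul_cancel₀ hq4, one_smul]
  -- injectivity of the eigenvalue sequences
  have hinj : ∀ θ:K, θ ≠ 0 → Function.Injective (fun n : ℕ => ((q^4)⁻¹)^n * θ) := by
    intro θ hθ
    have key : ∀ a b : ℕ, a ≤ b → ((q^4)⁻¹)^a = ((q^4)⁻¹)^b → a = b := by
      intro a b hle he
      by_contra hne
      have h1 : ((q^4)⁻¹)^a * ((q^4)⁻¹)^(b-a) = ((q^4)⁻¹)^a * 1 := by
        rw [mul_one, ← pow_add, he]
        congr 1
        omega
      have h2 : ((q^4)⁻¹)^(b-a) = 1 :=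
        mul_left_cancel₀ (pow_ne_zero _ (inv_ne_zero hq4)) h1
      rw [inv_pow] at h2
      have h3 : (q^4)^(b-a) = 1 := inv_eq_one.mp h2
      rw [← pow_mul] at h3
      exact hqru (4*(b-a)) (by omega) h3
    intro a b hab
    simp only at hab
    have hab' : ((q^4)⁻¹)^a = ((q^4)⁻¹)^b := mul_right_cancel₀ hθ hab
    rcases le_total a b with h | h
    · exact key a b h hab'
    · exact (key b a h hab'.symm).symm
  -- scalar nonvanishing
  have hsc : ∀ (i n j : ℕ), 0 < i → 0 < j →
      1 - (q^i)⁻¹ * (((q^4)⁻¹)^n * (q^j)⁻¹) ≠ 0 := by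
    intro i n j hi hj h
    have hcomb : (q^i)⁻¹ * (((q^4)⁻¹)^n * (q^j)⁻¹) = (q^(i+(4*n+j)))⁻¹ := by
      rw [inv_pow, ← pow_mul, ← mul_inv, ← mul_inv, ← pow_add, ← pow_add]
    rw [hcomb] at h
    have h1 : (q^(i+(4*n+j)))⁻¹ = 1 := by
      have := sub_eq_zero.mp h
      exact this.symm
    exact hqru (i+(4*n+j)) (by omega) (inv_eq_one.mp h1)
  -- Part 1 : the kernel is nonzero
  have ker_ne : LinearMap.ker (ρ ay) ≠ ⊥ := by
    intro hker
    have Minj : ∀ u : V, ρ ay u = 0 → u = 0 := by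
      intro u hu
      have : u ∈ LinearMap.ker (ρ ay) := LinearMap.mem_ker.mpr hu
      rw [hker] at this
      simpa using this
    obtain ⟨μ₀, hμ₀⟩ := Module.End.exists_eigenvalue (ρ az)
    have hC0 : LinearMap.ker (ρ az) ≠ ⊥ := by
      by_cases h0 : μ₀ = 0
      · subst h0
        rw [← Module.End.eigenspace_zero]
        exact Module.End.hasEigenvalue_iff.mp hμ₀
      · exfalso
        obtain ⟨v₀, hv₀⟩ := hμ₀.exists_hasEigenvector
        have chain : ∀ n : ℕ, (ρ az) (((ρ ay)^n) v₀)
            = (((q^4)⁻¹)^n * μ₀) • ((ρ ay)^n) v₀ ∧ ((ρ ay)^n) v₀ ≠ 0 := by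
          intro n
          induction n with
          | zero => exact ⟨by simpa using hv₀.apply_eq_smul, by simpa using hv₀.2⟩
          | succ n ih =>
            have hstep : ((ρ ay)^(n+1)) v₀ = (ρ ay) (((ρ ay)^n) v₀) := by
              rw [pow_succ', Module.End.mul_apply]
            constructor
            · rw [hstep]
              have hsm : (q^4)⁻¹ * (((q^4)⁻¹)^n * μ₀) = ((q^4)⁻¹)^(n+1) * μ₀ := by
                rw [pow_succ]; ring
              calc (ρ az) ((ρ ay) (((ρ ay)^n) v₀))
                  = ((ρ az) * (ρ ay)) (((ρ ay)^n) v₀) := rfl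
              _ = ((q^4)⁻¹) • ((ρ ay) ((ρ az) (((ρ ay)^n) v₀))) := by
                    rw [hCM]; rfl
              _ = (((q^4)⁻¹)^(n+1) * μ₀) • (ρ ay) (((ρ ay)^n) v₀) := by
                    rw [ih.1, map_smul, smul_smul, hsm]
            · intro h
              rw [hstep] at h
              exact ih.2 (Minj _ h)
        have hev : ∀ n : ℕ, Module.End.HasEigenvalue (ρ az) (((q^4)⁻¹)^n * μ₀) := by
          intro n
          exact Module.End.hasEigenvalue_of_hasEigenvector
            ⟨Module.End.mem_eigenspace_iff.mpr (chain n).1, (chain n).2⟩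
        exact Set.not_infinite.mpr (Module.End.finite_hasEigenvalue (ρ az))
          (Set.infinite_of_injective_forall_mem (hinj μ₀ h0) hev)
    have hMinv : ∀ u ∈ LinearMap.ker (ρ az), (ρ ay) u ∈ LinearMap.ker (ρ az) := by
      intro u hu
      rw [LinearMap.mem_ker] at hu ⊢
      calc (ρ az) ((ρ ay) u) = ((ρ az)*(ρ ay)) u := rfl
      _ = ((q^4)⁻¹) • ((ρ ay) ((ρ az) u)) := by rw [hCM]; rfl
      _ = 0 := by rw [hu, map_zero, smul_zero]
    haveI : Nontrivial (LinearMap.ker (ρ az)) := Submodule.nontrivial_iff_ne_bot.mpr hC0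
    obtain ⟨θ, hθ⟩ := Module.End.exists_eigenvalue ((ρ ay).restrict hMinv)
    obtain ⟨u, hu⟩ := hθ.exists_hasEigenvector
    have hvC : (ρ az) (u : V) = 0 := LinearMap.mem_ker.mp u.2
    have hvM : (ρ ay) (u : V) = θ • (u : V) := by
      calc (ρ ay) (u:V) = (((ρ ay).restrict hMinv) u : V) :=
            (LinearMap.restrict_coe_apply _ _ _).symm
      _ = θ • (u:V) := by rw [hu.apply_eq_smul]; rfl
    have hvne : (u : V) ≠ 0 := fun h => hu.2 (by exact_mod_cast h)
    have hθeq : ((1:K) - (q+q^3)*θ + q^4*(θ*θ)) • (u:V) = 0 := by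
      have h1 : ((ρ ax2) * (ρ az)) (u:V) = 0 := by
        rw [Module.End.mul_apply, hvC, map_zero]
      rw [hρ3, LinearMap.add_apply, LinearMap.sub_apply, LinearMap.smul_apply,
        LinearMap.smul_apply, Module.End.one_apply, Module.End.mul_apply, hvM, map_smul,
        hvM] at h1
      rw [← h1]
      module
    have hθ0 : (1:K) - (q+q^3)*θ + q^4*(θ*θ) = 0 :=
      (smul_eq_zero.mp hθeq).resolve_right hvne
    obtain ⟨j, hj, hjθ⟩ : ∃ j : ℕ, 0 < j ∧ θ = (q^j)⁻¹ := by
      have hfac : ((1:K) - q*θ)*(1-q^3*θ) = 0 := by linear_combination hθ0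
      rcases mul_eq_zero.mp hfac with h|h
      · refine ⟨1, one_pos, ?_⟩
        rw [pow_one]
        exact eq_inv_of_mul_eq_one_left (by linear_combination -h)
      · refine ⟨3, by norm_num, ?_⟩
        exact eq_inv_of_mul_eq_one_left (by linear_combination -h)
    have hθne : θ ≠ 0 := by rw [hjθ]; exact inv_ne_zero (pow_ne_zero _ hq)
    have chain2 : ∀ n : ℕ, (ρ ay) (((ρ ax2)^n) (u:V))
        = (((q^4)⁻¹)^n * θ) • ((ρ ax2)^n) (u:V) ∧ ((ρ ax2)^n) (u:V) ≠ 0 := by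
      intro n
      induction n with
      | zero => exact ⟨by simpa using hvM, by simpa using hvne⟩
      | succ n ih =>
        have hstep : ((ρ ax2)^(n+1)) (u:V) = (ρ ax2) (((ρ ax2)^n) (u:V)) := by
          rw [pow_succ', Module.End.mul_apply]
        constructor
        · rw [hstep]
          have hsm : (q^4)⁻¹ * (((q^4)⁻¹)^n * θ) = ((q^4)⁻¹)^(n+1) * θ := by
            rw [pow_succ]; ring
          calc (ρ ay) ((ρ ax2) (((ρ ax2)^n) (u:V)))
              = ((ρ ay) * (ρ ax2)) (((ρ ax2)^n) (u:V)) := rfl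
          _ = ((q^4)⁻¹) • ((ρ ax2) ((ρ ay) (((ρ ax2)^n) (u:V)))) := by rw [hMX]; rfl
          _ = (((q^4)⁻¹)^(n+1) * θ) • (ρ ax2) (((ρ ax2)^n) (u:V)) := by
                rw [ih.1, map_smul, smul_smul, hsm]
        · intro h
          have hCX : ((ρ az) * (ρ ax2)) (((ρ ax2)^n) (u:V))
              = ((1:K) - (q⁻¹+(q^3)⁻¹) * (((q^4)⁻¹)^n*θ)
                + (q^4)⁻¹*((((q^4)⁻¹)^n*θ)*(((q^4)⁻¹)^n*θ))) • (((ρ ax2)^n) (u:V)) := by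
            rw [hρ4, LinearMap.add_apply, LinearMap.sub_apply, LinearMap.smul_apply,
              LinearMap.smul_apply, Module.End.one_apply, Module.End.mul_apply, ih.1,
              map_smul, ih.1]
            module
          have h0' : ((1:K) - (q⁻¹+(q^3)⁻¹) * (((q^4)⁻¹)^n*θ)
              + (q^4)⁻¹*((((q^4)⁻¹)^n*θ)*(((q^4)⁻¹)^n*θ))) • (((ρ ax2)^n) (u:V)) = 0 := by
            rw [← hCX, Module.End.mul_apply, ← hstep, h, map_zero]
          rcases smul_eq_zero.mp h0' with hc | hw
          swap
          · exact ih.2 hw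
          have hfac2 : ((1:K) - q⁻¹*(((q^4)⁻¹)^n*θ)) * (1 - (q^3)⁻¹*(((q^4)⁻¹)^n*θ)) = 0 := by
            have hexp : ((1:K) - q⁻¹*(((q^4)⁻¹)^n*θ)) * (1 - (q^3)⁻¹*(((q^4)⁻¹)^n*θ))
                = 1 - (q⁻¹+(q^3)⁻¹) * (((q^4)⁻¹)^n*θ)
                  + (q^4)⁻¹*((((q^4)⁻¹)^n*θ)*(((q^4)⁻¹)^n*θ)) := by
              have hab : q⁻¹*(q^3)⁻¹ = (q^4)⁻¹ := by
                rw [← mul_inv]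
                congr 1
                ring
              rw [← hab]
              ring
            rw [hexp, hc]
          rcases mul_eq_zero.mp hfac2 with h1 | h1
          · rw [hjθ] at h1
            apply hsc 1 n j one_pos hj
            rw [pow_one]
            exact h1
          · rw [hjθ] at h1
            exact hsc 3 n j (by norm_num) hj h1
    have hev : ∀ n : ℕ, Module.End.HasEigenvalue (ρ ay) (((q^4)⁻¹)^n * θ) := by
      intro n
      exact Module.End.hasEigenvalue_of_hasEigenvector
        ⟨Module.End.mem_eigenspace_iff.mpr (chain2 n).1, (chain2 n).2⟩
    exact Set.not_infinite.mpr (Module.End.finite_hasEigenvalue (ρ ay))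
      (Set.infinite_of_injective_forall_mem (hinj θ hθne) hev)
  -- Part 2 : invariance under z²
  have inv_az : ∀ v ∈ LinearMap.ker (ρ ay), ρ az v ∈ LinearMap.ker (ρ ay) := by
    intro v hv
    rw [LinearMap.mem_ker] at hv ⊢
    calc (ρ ay) ((ρ az) v) = ((ρ ay) * (ρ az)) v := rfl
    _ = (q^4) • ((ρ az) ((ρ ay) v)) := by rw [hρ1]; rfl
    _ = 0 := by rw [hv, map_zero, smul_zero]
  -- Part 3 : invariance under νy νx
  have inv_aw : ∀ v ∈ LinearMap.ker (ρ ay), ρ aw v ∈ LinearMap.ker (ρ ay) := by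
    intro v hv
    rw [LinearMap.mem_ker] at hv ⊢
    calc (ρ ay) ((ρ aw) v) = ((ρ ay) * (ρ aw)) v := rfl
    _ = ((q^2) • (ρ aw) + (q^6-q^4) • (ρ az) - (q^2-1) • 1 : Module.End K V) ((ρ ay) v) := by
          rw [hρ6]; rfl
    _ = 0 := by rw [hv, map_zero]
  -- Part 4 : commutation
  have comm_on : ∀ v ∈ LinearMap.ker (ρ ay), ρ az (ρ aw v) = ρ aw (ρ az v) := by
    intro v _
    calc ρ az (ρ aw v) = ((ρ az) * (ρ aw)) v := rfl
    _ = ((ρ aw) * (ρ az)) v := by rw [hρ5]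
    _ = ρ aw (ρ az v) := rfl
  -- Part 5 : common eigenvector
  refine ⟨ker_ne, inv_az, inv_aw, comm_on, ?_⟩
  haveI : Nontrivial (LinearMap.ker (ρ ay)) := Submodule.nontrivial_iff_ne_bot.mpr ker_ne
  set f := (ρ az).restrict inv_az with hf
  set g := (ρ aw).restrict inv_aw with hg
  have hfg : ∀ w : LinearMap.ker (ρ ay), f (g w) = g (f w) := by
    intro w
    apply Subtype.ext
    rw [LinearMap.restrict_coe_apply, LinearMap.restrict_coe_apply,
      LinearMap.restrict_coe_apply, LinearMap.restrict_coe_apply]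
    exact comm_on (w : V) w.2
  obtain ⟨μ₁, hμ₁⟩ := Module.End.exists_eigenvalue f
  have hEinv : ∀ w ∈ Module.End.eigenspace f μ₁, g w ∈ Module.End.eigenspace f μ₁ := by
    intro w hw
    rw [Module.End.mem_eigenspace_iff] at hw ⊢
    rw [hfg w, hw, map_smul]
  haveI : Nontrivial (Module.End.eigenspace f μ₁) :=
    Submodule.nontrivial_iff_ne_bot.mpr (Module.End.hasEigenvalue_iff.mp hμ₁)
  obtain ⟨μ₂, hμ₂⟩ := Module.End.exists_eigenvalue (g.restrict hEinv)
  obtain ⟨uu, huu⟩ := hμ₂.exists_hasEigenvector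
  refine ⟨((uu : LinearMap.ker (ρ ay)) : V), (uu : LinearMap.ker (ρ ay)).2, ?_, μ₁, μ₂, ?_, ?_⟩
  · intro h
    apply huu.2
    have h1 : (uu : LinearMap.ker (ρ ay)) = 0 := by exact_mod_cast h
    exact_mod_cast h1
  · have hm : f (uu : LinearMap.ker (ρ ay)) = μ₁ • (uu : LinearMap.ker (ρ ay)) :=
      Module.End.mem_eigenspace_iff.mp uu.2
    calc ρ az ((uu : LinearMap.ker (ρ ay)) : V)
        = ((f (uu : LinearMap.ker (ρ ay)) : LinearMap.ker (ρ ay)) : V) :=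
          (LinearMap.restrict_coe_apply _ _ _).symm
    _ = μ₁ • ((uu : LinearMap.ker (ρ ay)) : V) := by rw [hm]; rfl
  · have hgv : g.restrict hEinv uu = μ₂ • uu := huu.apply_eq_smul
    have hgk : g (uu : LinearMap.ker (ρ ay)) = μ₂ • (uu : LinearMap.ker (ρ ay)) := by
      have h2 := congrArg (Subtype.val) hgv
      rwa [LinearMap.restrict_coe_apply, SetLike.val_smul] at h2
    calc ρ aw ((uu : LinearMap.ker (ρ ay)) : V)
        = ((g (uu : LinearMap.ker (ρ ay)) : LinearMap.ker (ρ ay)) : V) :=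
          (LinearMap.restrict_coe_apply _ _ _).symm
    _ = μ₂ • ((uu : LinearMap.ker (ρ ay)) : V) := by rw [hgk]; rfl
end

section
/- Assume q is not a root of unity. Let V be a finite-dimensional irreducible module over the subalgebra A of U_q(sl_2) generated by ν_x, ν_y, ν_z, let v_0 ∈ V be nonzero with ν_y v_0 = 0 and v_0 a common eigenvector for z^2 and ν_yν_x, set v_i = ν_x^i v_0, and let d be maximal with v_d ≠ 0. Then for 0 ≤ i ≤ d: ν_x v_i = v_{i+1}, ν_y v_i = (q^{2i} - 1)(q^{2(i-d-1)} - 1) v_{i-1}, and z^2 v_i = q^{4i - 2d} v_i (with v_{-1} = v_{d+1} = 0). -/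
/-- For `q` not a root of unity, `V` a finite-dimensional irreducible module over
the subalgebra `A` of `U_q(sl_2)` generated by `ν_x, ν_y, ν_z`, and `v_0 ≠ 0`
with `ν_y v_0 = 0`, a common eigenvector for `z²` and `ν_y ν_x`; with
`v_i = ν_x^i v_0` and `d` maximal with `v_d ≠ 0`, one has for `0 ≤ i ≤ d`:
`ν_x v_i = v_{i+1}`, `ν_y v_i = (q^{2i}-1)(q^{2(i-d-1)}-1) v_{i-1}`, and
`z² v_i = q^{4i-2d} v_i`. -/
theorem stmt_19 (K : Type*) [Field K] (q : K) (hq : q ≠ 0)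
    (hqru : ∀ n : ℕ, 0 < n → q ^ n ≠ 1)
    (U : Type*) [Ring U] [Algebra K U] (x y yi z : U)
    (hyyi : y * yi = 1) (hyiy : yi * y = 1)
    (hxy : q • (x * y) - q⁻¹ • (y * x) = (q - q⁻¹) • (1 : U))
    (hyz : q • (y * z) - q⁻¹ • (z * y) = (q - q⁻¹) • (1 : U))
    (hzx : q • (z * x) - q⁻¹ • (x * z) = (q - q⁻¹) • (1 : U))
    (νx νy νz : U)
    (hνx : νx = q • ((1 : U) - y * z))
    (hνy : νy = q • ((1 : U) - z * x))
    (hνz : νz = q • ((1 : U) - x * y))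
    (A : Subalgebra K U) (hA : A = Algebra.adjoin K {νx, νy, νz})
    (V : Type*) [AddCommGroup V] [Module K V] [FiniteDimensional K V]
    (ρ : A →ₐ[K] Module.End K V)
    (hirr : ∀ W : Submodule K V, (∀ a : A, ∀ w ∈ W, ρ a w ∈ W) → W = ⊥ ∨ W = ⊤)
    (ax ay az : A)
    (hax : (ax : U) = νx) (hay : (ay : U) = νy) (haz : (az : U) = z ^ 2)
    (v₀ : V) (hv₀ : v₀ ≠ 0) (hv₀y : ρ ay v₀ = 0)
    (hv₀z : ∃ μ : K, ρ az v₀ = μ • v₀)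
    (hv₀yx : ∃ μ : K, ρ ay (ρ ax v₀) = μ • v₀)
    (v : ℕ → V) (hv : ∀ i : ℕ, v i = ((ρ ax) ^ i) v₀)
    (d : ℕ) (hd : v d ≠ 0) (hd' : ∀ i : ℕ, d < i → v i = 0) :
    (∀ i : ℕ, i ≤ d → ρ ax (v i) = v (i + 1)) ∧
    (ρ ay (v 0) = 0) ∧
    (∀ i : ℕ, 1 ≤ i → i ≤ d → ρ ay (v i)
      = ((q ^ (2 * (i : ℤ)) - 1) * (q ^ (2 * ((i : ℤ) - (d : ℤ) - 1)) - 1)) • v (i - 1)) ∧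
    (∀ i : ℕ, i ≤ d → ρ az (v i) = (q ^ (4 * (i : ℤ) - 2 * (d : ℤ))) • v i) := by
  have hq2 : (q : K) * (q - q⁻¹) = q ^ 2 - 1 := by field_simp; try ring
  have hq3 : (q⁻¹ : K) * (q - q⁻¹) = 1 - q⁻¹ * q⁻¹ := by field_simp; try ring
  have R1' : z * y = (q ^ 2) • (y * z) - (q ^ 2 - 1) • (1 : U) := by
    have h := congrArg (fun u : U => q • u) hyz
    simp only [smul_sub, smul_smul, mul_inv_cancel₀ hq, one_smul, hq2, ← pow_two] at h
    rw [sub_eq_iff_eq_add] at h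
    rw [h]; abel
  have R2' : x * z = (q ^ 2) • (z * x) - (q ^ 2 - 1) • (1 : U) := by
    have h := congrArg (fun u : U => q • u) hzx
    simp only [smul_sub, smul_smul, mul_inv_cancel₀ hq, one_smul, hq2, ← pow_two] at h
    rw [sub_eq_iff_eq_add] at h
    rw [h]; abel
  have R3' : x * y = (q⁻¹ * q⁻¹) • (y * x) + (1 - q⁻¹ * q⁻¹) • (1 : U) := by
    have h := congrArg (fun u : U => q⁻¹ • u) hxy
    simp only [smul_sub, smul_smul, inv_mul_cancel₀ hq, one_smul, hq3] at h
    rw [sub_eq_iff_eq_add] at h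
    rw [h]; abel
  have R1 : ∀ w : U, z * (y * w) = (q ^ 2) • (y * (z * w)) - (q ^ 2 - 1) • w := by
    intro w; rw [← mul_assoc, R1', sub_mul, smul_mul_assoc, smul_mul_assoc, one_mul, mul_assoc]
  have R2 : ∀ w : U, x * (z * w) = (q ^ 2) • (z * (x * w)) - (q ^ 2 - 1) • w := by
    intro w; rw [← mul_assoc, R2', sub_mul, smul_mul_assoc, smul_mul_assoc, one_mul, mul_assoc]
  have R3 : ∀ w : U, x * (y * w) = (q⁻¹ * q⁻¹) • (y * (x * w)) + (1 - q⁻¹ * q⁻¹) • w := by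
    intro w; rw [← mul_assoc, R3', add_mul, smul_mul_assoc, smul_mul_assoc, one_mul, mul_assoc]
  have key1 : νy * νx = (q ^ 2) • (νx * νy) + (q ^ 2 - 1) • (z ^ 2 - 1) := by
    subst hνx; subst hνy
    simp only [pow_two, mul_sub, sub_mul, mul_add, add_mul, mul_one, one_mul, smul_mul_assoc,
      mul_smul_comm, mul_assoc, R1, R2, R3, R1', R2', R3', smul_sub, smul_add, smul_smul]
    match_scalars <;> (field_simp; try ring)
  have key2 : z ^ 2 * νx = (q ^ 2 * q ^ 2) • (νx * z ^ 2) := by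
    subst hνx
    simp only [pow_two, mul_sub, sub_mul, mul_add, add_mul, mul_one, one_mul, smul_mul_assoc,
      mul_smul_comm, mul_assoc, R1, R2, R3, R1', R2', R3', smul_sub, smul_add, smul_smul]
    match_scalars <;> (field_simp; try ring)
  have hA1 : ay * ax = (q ^ 2) • (ax * ay) + (q ^ 2 - 1) • (az - 1) := by
    apply Subtype.coe_injective
    push_cast [hax, hay, haz]
    exact key1
  have hA2 : az * ax = (q ^ 2 * q ^ 2) • (ax * az) := by
    apply Subtype.coe_injective
    push_cast [hax, hay, haz]
    exact key2
  have hE1 : ∀ w : V, ρ ay (ρ ax w)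
      = q ^ 2 • ρ ax (ρ ay w) + (q ^ 2 - 1) • (ρ az w - w) := by
    intro w
    have h : ρ (ay * ax) w = ρ ((q ^ 2) • (ax * ay) + (q ^ 2 - 1) • (az - 1)) w := by rw [hA1]
    simpa [map_mul, map_add, map_smul, map_sub, map_one, Module.End.mul_apply,
      LinearMap.add_apply, LinearMap.smul_apply, LinearMap.sub_apply, Module.End.one_apply]
      using h
  have hE2 : ∀ w : V, ρ az (ρ ax w) = (q ^ 2 * q ^ 2) • ρ ax (ρ az w) := by
    intro w
    have h : ρ (az * ax) w = ρ ((q ^ 2 * q ^ 2) • (ax * az)) w := by rw [hA2]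
    simpa [map_mul, map_smul, Module.End.mul_apply, LinearMap.smul_apply] using h
  have hstep : ∀ i : ℕ, ρ ax (v i) = v (i + 1) := by
    intro i
    rw [hv i, hv (i + 1), pow_succ', Module.End.mul_apply]
  have hv0 : v 0 = v₀ := by rw [hv 0, pow_zero, Module.End.one_apply]
  obtain ⟨μ, hμ0⟩ := hv₀z
  have hZ : ∀ i : ℕ, ρ az (v i) = ((q ^ 4) ^ i * μ) • v i := by
    intro i
    induction i with
    | zero => simpa [hv0] using hμ0
    | succ n ih =>
      rw [← hstep n, hE2, ih, map_smul, smul_smul, hstep n]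
      congr 1
      ring
  have hY : ∀ i : ℕ, ρ ay (v (i + 1))
      = (μ * (q ^ 4) ^ (i + 1) / q ^ 2 + 1 - (q ^ 2) ^ (i + 1)
          - μ * (q ^ 2) ^ (i + 1) / q ^ 2) • v i := by
    intro i
    induction i with
    | zero =>
      have h1 := hE1 v₀
      rw [hv₀y, map_zero, smul_zero, zero_add, hμ0, ← hv0, hstep 0] at h1
      rw [h1]
      match_scalars <;> (field_simp; try ring)
    | succ n ih =>
      have h1 := hE1 (v (n + 1))
      rw [hstep (n + 1)] at h1
      rw [h1, ih, map_smul, hstep n, hZ (n + 1)]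
      match_scalars <;> (field_simp; try ring)
  have hvd1 : v (d + 1) = 0 := hd' _ (by omega)
  have hc : μ * (q ^ 4) ^ (d + 1) / q ^ 2 + 1 - (q ^ 2) ^ (d + 1)
      - μ * (q ^ 2) ^ (d + 1) / q ^ 2 = 0 := by
    have h := hY d
    rw [hvd1, map_zero] at h
    rcases smul_eq_zero.mp h.symm with h' | h'
    · exact h'
    · exact absurd h' hd
  have hfac : (q ^ (2 * d + 2) - 1) * (q ^ 2 * (μ * q ^ (2 * d) - 1)) = 0 := by
    field_simp at hc
    linear_combination hc
  have hμd : μ = (q ^ (2 * d))⁻¹ := by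
    rcases mul_eq_zero.mp hfac with h' | h'
    · exact absurd (by linear_combination h') (hqru (2 * d + 2) (by omega))
    · rcases mul_eq_zero.mp h' with h'' | h''
      · exact absurd h'' (pow_ne_zero 2 hq)
      · have : μ * q ^ (2 * d) = 1 := by linear_combination h''
        field_simp
        linear_combination this
  subst hμd
  have coeffEq : ∀ i : ℕ,
      (q ^ (2 * d))⁻¹ * (q ^ 4) ^ i / q ^ 2 + 1 - (q ^ 2) ^ i
        - (q ^ (2 * d))⁻¹ * (q ^ 2) ^ i / q ^ 2
      = (q ^ (2 * (i : ℤ)) - 1) * (q ^ (2 * ((i : ℤ) - (d : ℤ) - 1)) - 1) := by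
    intro i
    have e1 : q ^ (2 * (i : ℤ)) = q ^ (2 * i) := by
      rw [← zpow_natCast q (2 * i)]; norm_num
    have e2 : q ^ (2 * ((i : ℤ) - (d : ℤ) - 1)) = q ^ (2 * i) / q ^ (2 * d + 2) := by
      rw [show 2 * ((i : ℤ) - (d : ℤ) - 1) = ((2 * i : ℕ) : ℤ) - ((2 * d + 2 : ℕ) : ℤ) by
        push_cast; ring, zpow_sub₀ hq, zpow_natCast, zpow_natCast]
    rw [e1, e2]
    field_simp
    ring
  refine ⟨fun i _ => hstep i, by rw [hv0]; exact hv₀y, fun i h1 hi => ?_, fun i hi => ?_⟩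
  · obtain ⟨j, rfl⟩ : ∃ j, i = j + 1 := ⟨i - 1, by omega⟩
    rw [Nat.add_sub_cancel, hY j, coeffEq (j + 1)]
  · rw [hZ i]
    congr 1
    rw [show 4 * (i : ℤ) - 2 * (d : ℤ) = ((4 * i : ℕ) : ℤ) - ((2 * d : ℕ) : ℤ) by
      push_cast; ring, zpow_sub₀ hq, zpow_natCast, zpow_natCast, div_eq_mul_inv, ← pow_mul]
end
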